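/- For every deterministic skip free path M (a sequence (M_n)_{n≥0} with M_0 = 0 and M_n − M_{n−1} ∈ {−1,0,1}) and every a ∈ {0, 1, 2}, the time-change and reflection operations commute path by path: S^{Θ^a(M)} = Θ^a(S^M). -/

import Mathlib

open MeasureTheory ProbabilityTheory Filter Finset
open scoped ENNReal NNReal

noncomputable section

/-- The quadratic variation `[s]_n` of a discrete path `s`. -/
def qv (s : ℕ → ℤ) (n : ℕ) : ℕ :=
  ∑ k ∈ Finset.range n, (s (k + 1) - s k).natAbs ^ 2

/-- Reflection of a discrete path at level `a`:
`Θ^a(s)_n = ∑_{k=1}^n (1_{k ≤ T_a(s)} - 1_{k > T_a(s)}) (s_k - s_{k-1})`,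
where `k ≤ T_a(s)` iff `s_j ≠ a` for every `j < k`. -/
def reflect (a : ℤ) (s : ℕ → ℤ) : ℕ → ℤ := fun n =>
  ∑ k ∈ Finset.range n, if ∀ j ≤ k, s j ≠ a then s (k + 1) - s k else s k - s (k + 1)

/-- A (deterministic) skip free path: starts at `0` and has increments in `{-1, 0, 1}`. -/
def SkipFreePath (s : ℕ → ℤ) : Prop :=
  s 0 = 0 ∧ ∀ n, s (n + 1) - s n = 1 ∨ s (n + 1) - s n = 0 ∨ s (n + 1) - s n = -1

/-- The uniform law on `{-1, +1} ⊆ ℤ`. -/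
def bern : Measure ℤ :=
  (2 : ℝ≥0∞)⁻¹ • Measure.dirac (1 : ℤ) + (2 : ℝ≥0∞)⁻¹ • Measure.dirac (-1 : ℤ)

/-- `S` is a symmetric Bernoulli random walk: `S_0 = 0` a.s. and the increments are
i.i.d. uniform on `{-1, +1}`. -/
def IsBernoulliRW {Ω : Type*} [MeasurableSpace Ω] (P : Measure Ω) (S : ℕ → Ω → ℤ) : Prop :=
  (∀ᵐ ω ∂P, S 0 ω = 0) ∧
    iIndepFun (fun n ω => S (n + 1) ω - S n ω) P ∧
    ∀ n, Measure.map (fun ω => S (n + 1) ω - S n ω) P = bern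

/-- `M` is a discrete Ocone local martingale: it is equal in law to a symmetric Bernoulli
random walk time changed by an independent nondecreasing `ℕ`-valued process with
increments in `{0, 1}`. -/
def IsDiscreteOcone {Ω : Type*} [MeasurableSpace Ω] (P : Measure Ω) (M : ℕ → Ω → ℤ) : Prop :=
  ∃ (Ω' : Type) (_ : MeasurableSpace Ω') (P' : Measure Ω') (S : ℕ → Ω' → ℤ) (A : ℕ → Ω' → ℕ),
    IsProbabilityMeasure P' ∧ IsBernoulliRW P' S ∧
    (∀ ω, A 0 ω = 0) ∧ (∀ ω n, A (n + 1) ω = A n ω ∨ A (n + 1) ω = A n ω + 1) ∧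
    IndepFun (fun ω => (S · ω)) (fun ω => (A · ω)) P' ∧
    Measure.map (fun ω => (fun n => M n ω)) P
      = Measure.map (fun ω => (fun n => S (A n ω) ω)) P'

/-- The successive times at which the quadratic variation of `s` increases:
`τ_0 = 0` and `τ_{n+1} = inf {k > τ_n : [s]_k = n + 1}`, with `inf ∅ = τ_n`. -/
def tauP (s : ℕ → ℤ) : ℕ → ℕ
  | 0 => 0
  | n + 1 => max (tauP s n) (sInf {k | tauP s n < k ∧ qv s k = n + 1})

/-- The time-changed path `S^s = (s_{τ_n})_n`. -/
def SM (s : ℕ → ℤ) : ℕ → ℤ := fun n => s (tauP s n)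

/-! Reflection only flips signs of increments, so it preserves the quadratic variation and hence
the times `τ_n`. For a skip free path, `s_j = s_{τ_{[s]_j}}`, so on a block `[τ_n, τ_{n+1})` the
path has hit `a` iff one of `s_{τ_0}, …, s_{τ_n}` equals `a`. The reflection sign is therefore
constant on each block, and the increments of `Θ^a(s)` over the block telescope to the increment
`±(S^s_{n+1} - S^s_n)` of `Θ^a(S^s)`. -/

lemma qv_succ (s : ℕ → ℤ) (n : ℕ) :
    qv s (n + 1) = qv s n + (s (n + 1) - s n).natAbs ^ 2 :=
  Finset.sum_range_succ _ _

lemma qv_mono (s : ℕ → ℤ) : Monotone (qv s) :=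
  monotone_nat_of_le_succ fun n => by rw [qv_succ]; omega

lemma SkipFreePath.qv_succ_eq_or {s : ℕ → ℤ} (hs : SkipFreePath s) (n : ℕ) :
    qv s (n + 1) = qv s n ∨ qv s (n + 1) = qv s n + 1 := by
  rw [qv_succ]
  rcases hs.2 n with h | h | h <;> simp [h]

lemma apply_succ_eq_of_qv_succ_eq {s : ℕ → ℤ} {n : ℕ} (h : qv s (n + 1) = qv s n) :
    s (n + 1) = s n := by
  rw [qv_succ, add_eq_left, pow_eq_zero_iff two_ne_zero, Int.natAbs_eq_zero, sub_eq_zero] at h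
  exact h

lemma reflect_succ (a : ℤ) (s : ℕ → ℤ) (k : ℕ) :
    reflect a s (k + 1) = reflect a s k +
      if ∀ j ≤ k, s j ≠ a then s (k + 1) - s k else s k - s (k + 1) :=
  Finset.sum_range_succ _ _

lemma qv_reflect (a : ℤ) (s : ℕ → ℤ) : qv (reflect a s) = qv s := by
  funext n
  refine Finset.sum_congr rfl fun k _ => ?_
  rw [reflect_succ, add_sub_cancel_left]
  split_ifs
  · rfl
  · rw [← Int.natAbs_neg, neg_sub]

lemma tauP_eq_of_qv_eq {s t : ℕ → ℤ} (h : qv s = qv t) : tauP s = tauP t := by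
  funext n
  induction n with
  | zero => rfl
  | succ n ih => rw [tauP, tauP, ih, h]

lemma tauP_mono (s : ℕ → ℤ) : Monotone (tauP s) :=
  monotone_nat_of_le_succ fun _ => le_max_left _ _

lemma tauP_succ_eq_of_qv_succ {s : ℕ → ℤ} {k m : ℕ} (hτ : tauP s k ≤ m) (hm : qv s m = k)
    (hm' : qv s (m + 1) = k + 1) : tauP s (k + 1) = m + 1 := by
  have hmem : m + 1 ∈ {i | tauP s k < i ∧ qv s i = k + 1} := ⟨Nat.lt_succ_of_le hτ, hm'⟩
  have hinf : sInf {i | tauP s k < i ∧ qv s i = k + 1} = m + 1 := by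
    refine le_antisymm (Nat.sInf_le hmem) (le_csInf ⟨_, hmem⟩ fun i hi => ?_)
    by_contra! hlt
    have := qv_mono s (Nat.le_of_lt_succ hlt)
    have := hi.2
    omega
  rw [tauP, hinf, max_eq_right (hτ.trans m.le_succ)]

lemma SkipFreePath.tauP_qv_spec {s : ℕ → ℤ} (hs : SkipFreePath s) (m : ℕ) :
    tauP s (qv s m) ≤ m ∧ s (tauP s (qv s m)) = s m := by
  induction m with
  | zero => simp [tauP, qv]
  | succ m ih =>
    rcases hs.qv_succ_eq_or m with h | h
    · rw [h, apply_succ_eq_of_qv_succ_eq h]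
      exact ⟨ih.1.trans m.le_succ, ih.2⟩
    · rw [h, tauP_succ_eq_of_qv_succ ih.1 rfl h]
      exact ⟨le_rfl, rfl⟩

lemma SkipFreePath.qv_le_of_lt_tauP_succ {s : ℕ → ℤ} (hs : SkipFreePath s) {n m : ℕ}
    (hm : m < tauP s (n + 1)) : qv s m ≤ n := by
  by_contra! h
  exact (tauP_mono s h).trans (hs.tauP_qv_spec m).1 |>.not_gt hm

lemma SkipFreePath.forall_ne_iff_forall_tauP_ne {s : ℕ → ℤ} (hs : SkipFreePath s) (a : ℤ)
    {n m : ℕ} (h₁ : tauP s n ≤ m) (h₂ : m < tauP s (n + 1)) :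
    (∀ j ≤ m, s j ≠ a) ↔ ∀ j ≤ n, s (tauP s j) ≠ a := by
  refine ⟨fun h j hj => h _ ((tauP_mono s hj).trans h₁), fun h j hj => ?_⟩
  rw [← (hs.tauP_qv_spec j).2]
  exact h _ ((qv_mono s hj).trans (hs.qv_le_of_lt_tauP_succ h₂))

lemma reflect_eq_of_forall_ne_iff {a : ℤ} {s : ℕ → ℤ} {m₀ m₁ : ℕ} {p : Prop} [Decidable p]
    (hm : m₀ ≤ m₁) (hp : ∀ k, m₀ ≤ k → k < m₁ → ((∀ j ≤ k, s j ≠ a) ↔ p)) :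
    reflect a s m₁ = reflect a s m₀ + if p then s m₁ - s m₀ else s m₀ - s m₁ := by
  induction m₁, hm using Nat.le_induction with
  | base => simp
  | succ m hm ih =>
    rw [reflect_succ, ih fun k hk hkm => hp k hk (hkm.trans m.lt_succ_self)]
    simp only [hp m hm m.lt_succ_self]
    split_ifs <;> ring

lemma reflect_comp_eq {a : ℤ} {s : ℕ → ℤ} {τ : ℕ → ℕ} (hτ : Monotone τ) (hτ₀ : τ 0 = 0)
    (hblock : ∀ n m, τ n ≤ m → m < τ (n + 1) → ((∀ j ≤ m, s j ≠ a) ↔ ∀ j ≤ n, s (τ j) ≠ a))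
    (n : ℕ) : reflect a s (τ n) = reflect a (s ∘ τ) n := by
  induction n with
  | zero => simp [hτ₀, reflect]
  | succ n ih =>
    rw [reflect_eq_of_forall_ne_iff (hτ n.le_succ) (hblock n), ih, reflect_succ]
    rfl

theorem timeChange_reflect_comm_general (s : ℕ → ℤ) (hs : SkipFreePath s)
    (a : ℤ) :
    ∀ n, SM (reflect a s) n = reflect a (SM s) n := by
  intro n
  calc SM (reflect a s) n = reflect a s (tauP s n) := by
        rw [SM, tauP_eq_of_qv_eq (qv_reflect a s)]
    _ = reflect a (SM s) n :=
        reflect_comp_eq (tauP_mono s) rfl (fun _ _ => hs.forall_ne_iff_forall_tauP_ne a) n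

/-- **Path-by-path commutation of time change and reflection.** For every deterministic
skip free path `s` and every `a ∈ {0, 1, 2}`, one has `S^{Θ^a(s)} = Θ^a(S^s)`. -/
theorem timeChange_reflect_comm (s : ℕ → ℤ) (hs : SkipFreePath s)
    (a : ℤ) (ha : a = 0 ∨ a = 1 ∨ a = 2) :
    ∀ n, SM (reflect a s) n = reflect a (SM s) n :=
  timeChange_reflect_comm_general s hs a
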